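/- With μ and μ* as above: (1) μ* : h_M → h_L is a natural transformation having a b-index; (2) μ = (μ*)⁻¹ as maps S(h_L) → S(h_M); and (3) for any natural transformation f : h_M → h_L with a b-index, f = (f⁻¹)*. Hence the assignment h_L ↦ S(h_L), f ↦ f⁻¹ is a full and faithful, essentially surjective functor from the category of evaluation presheaves with b-indexed natural transformations to the opposite of the category of Heyting algebras freely generated by finite distributive lattices, i.e., an equivalence (duality) of categories. -/

import Mathlib

/-- A finite rooted poset: a finite partial order with a greatest element (the root). -/
structure FRP : Type 1 where
  carrier : Type
  [po : PartialOrder carrier]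
  [fin : Finite carrier]
  root : carrier
  le_root : ∀ x : carrier, x ≤ root

attribute [instance] FRP.po FRP.fin

/-- The downset of a point, as a finite rooted poset. -/
def FRP.down (P : FRP) (p : P.carrier) : FRP where
  carrier := {x : P.carrier // x ≤ p}
  root := ⟨p, le_refl p⟩
  le_root := fun x => x.2

/-- An `L`-evaluation: a monotone map from a finite rooted poset into `L`. -/
structure Eval (L : Type) [PartialOrder L] : Type 1 where
  P : FRP
  map : P.carrier → L
  mono : Monotone map

variable {L : Type} [PartialOrder L]

/-- Restriction of an evaluation to the downset of a point. -/
def Eval.restrict (u : Eval L) (p : u.P.carrier) : Eval L where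
  P := u.P.down p
  map := fun x => u.map x.1
  mono := fun _ _ h => u.mono h

/-- The value of an evaluation at the root of its domain. -/
def Eval.rootVal (u : Eval L) : L := u.map u.P.root

/-- The relations `∼ₙ` on `L`-evaluations. -/
def sim (L : Type) [PartialOrder L] : ℕ → Eval L → Eval L → Prop
  | 0 => fun u v => u.rootVal = v.rootVal
  | n+1 => fun u v =>
      (∀ p, ∃ q, sim L n (u.restrict p) (v.restrict q)) ∧
      (∀ q, ∃ p, sim L n (v.restrict q) (u.restrict p))

/-- The relations `≤ₙ`: `lev L n v u` means `v ≤ₙ u`. -/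
def lev (L : Type) [PartialOrder L] : ℕ → Eval L → Eval L → Prop
  | 0 => fun v u => v.rootVal ≤ u.rootVal
  | n+1 => fun v u => ∀ q, ∃ p, sim L n (v.restrict q) (u.restrict p)

/-- `S` is a subpresheaf of `h_L`: closed under restriction. -/
def IsSub (L : Type) [PartialOrder L] (S : Set (Eval L)) : Prop :=
  ∀ u ∈ S, ∀ p, u.restrict p ∈ S

/-- `S` has b-index `n`: closed under `∼ₙ`. -/
def BIndex (L : Type) [PartialOrder L] (n : ℕ) (S : Set (Eval L)) : Prop :=
  ∀ u ∈ S, ∀ v, sim L n u v → v ∈ S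

/-- `S` has b≤-index `n`: closed under being `≤ₙ`-below a member. -/
def BleIndex (L : Type) [PartialOrder L] (n : ℕ) (S : Set (Eval L)) : Prop :=
  ∀ u ∈ S, ∀ v, lev L n v u → v ∈ S

/-- `↓ₙ u`. -/
def downSet (L : Type) [PartialOrder L] (n : ℕ) (u : Eval L) : Set (Eval L) :=
  {v | lev L n v u}

/-- Pointwise description of Heyting implication of subpresheaves. -/
def himpPt (L : Type) [PartialOrder L] (S T : Set (Eval L)) : Set (Eval L) :=
  {u | ∀ p, u.restrict p ∈ S → u.restrict p ∈ T}

/-- The embedding of downward closed subsets of `L` into subpresheaves. -/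
def iota (L : Type) [PartialOrder L] (d : Set L) : Set (Eval L) :=
  {u | u.rootVal ∈ d}

/-- Membership in the Heyting algebra `S(h_L)`: subpresheaves with a b-index. -/
def InS (L : Type) [PartialOrder L] (S : Set (Eval L)) : Prop :=
  IsSub L S ∧ ∃ n, BIndex L n S

/-- `ev_f`. -/
def evalMap (L : Type) [PartialOrder L] (f : Eval L) (X : Set (Eval L)) : Set f.P.carrier :=
  {p | f.restrict p ∈ X}

/-- Heyting implication of downward closed subsets of a poset. -/
def himpD {M : Type} [PartialOrder M] (a b : Set M) : Set M :=
  {p | ∀ q ≤ p, q ∈ a → q ∈ b}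

/-!
The `n`-bisimulation type of an evaluation (the set of `(n-1)`-types of its restrictions) takes
finitely many values when `L` is finite. The subpresheaf of evaluations omitting a given
`n`-type is obtained from `ι_L` by finitely many Heyting operations, and a member of `S(h_L)`
with b-index `n` is the finite union, over the `(n+1)`-types `s` of its members, of the
evaluations whose restrictions all have `n`-type in `s`. So `S(h_L)` is generated by the image
of `ι_L`, and two Heyting morphisms that agree on `ι_L` agree on `S(h_L)`.

An element of `L` is determined by the lower sets containing it, so an evaluation dual to
`ev_u ∘ G` is unique, and its value at `p` only depends on which `G d` contain `u|p`. The
finitely many `μ(ι_L d)` have a common b-index `m`; this makes `μ*` natural with b-index `m`,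
so `(μ*)⁻¹` is a Heyting morphism agreeing with `μ` on `ι_L`, which gives (2). For (3),
naturality of `f` says precisely that `f` is dual to `f⁻¹ ∘ ι_L`.
-/

section Bisimulation

lemma sim_symm {n : ℕ} {u v : Eval L} (h : sim L n u v) : sim L n v u := by
  cases n with
  | zero => exact Eq.symm h
  | succ n => exact ⟨h.2, h.1⟩

lemma sim_of_sim_succ : ∀ {n : ℕ} {u v : Eval L}, sim L (n+1) u v → sim L n u v
  | 0, u, v, ⟨h₁, h₂⟩ => by
      obtain ⟨q, hq⟩ := h₁ u.P.root
      obtain ⟨p, hp⟩ := h₂ v.P.root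
      exact le_antisymm (hq.trans_le (v.mono (v.P.le_root q)))
        (hp.trans_le (u.mono (u.P.le_root p)))
  | _ + 1, _, _, ⟨h₁, h₂⟩ =>
      ⟨fun p => (h₁ p).imp fun _ => sim_of_sim_succ, fun q => (h₂ q).imp fun _ => sim_of_sim_succ⟩

lemma sim_of_le {n k : ℕ} (hnk : n ≤ k) {u v : Eval L} (h : sim L k u v) : sim L n u v := by
  induction k, hnk using Nat.le_induction with
  | base => exact h
  | succ k _ ih => exact ih (sim_of_sim_succ h)

def FRP.downOrderIso {P Q : FRP} (e : P.carrier ≃o Q.carrier) (p : P.carrier) :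
    (P.down p).carrier ≃o (Q.down (e p)).carrier where
  toFun x := ⟨e x.1, e.monotone x.2⟩
  invFun y := ⟨e.symm y.1, e.symm_apply_le.2 y.2⟩
  left_inv x := Subtype.ext (e.symm_apply_apply x.1)
  right_inv y := Subtype.ext (e.apply_symm_apply y.1)
  map_rel_iff' := e.le_iff_le

lemma sim_of_orderIso : ∀ (n : ℕ) {u v : Eval L} (e : u.P.carrier ≃o v.P.carrier),
    (∀ x, v.map (e x) = u.map x) → sim L n u v
  | 0, u, v, e, he => by
      have hroot : e u.P.root = v.P.root :=
        le_antisymm (v.P.le_root _) (e.symm_apply_le.1 (u.P.le_root _))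
      exact (he u.P.root).symm.trans (congrArg v.map hroot)
  | n + 1, u, v, e, he =>
      ⟨fun p => ⟨e p, sim_of_orderIso n (FRP.downOrderIso e p) fun x => he x.1⟩,
       fun q => by
        obtain ⟨p, rfl⟩ := e.surjective q
        exact ⟨p, sim_symm (sim_of_orderIso n (FRP.downOrderIso e p) fun x => he x.1)⟩⟩

lemma sim_restrict_root (n : ℕ) (u : Eval L) : sim L n (u.restrict u.P.root) u :=
  sim_of_orderIso n
    { toFun := Subtype.val
      invFun := fun x => ⟨x, u.P.le_root x⟩
      left_inv := fun _ => rfl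
      right_inv := fun _ => rfl
      map_rel_iff' := Iff.rfl }
    fun _ => rfl

lemma sim_restrict_restrict (n : ℕ) (u : Eval L) (p : u.P.carrier)
    (r : (u.restrict p).P.carrier) : sim L n ((u.restrict p).restrict r) (u.restrict r.1) :=
  sim_of_orderIso n
    { toFun := fun x => ⟨x.1.1, x.2⟩
      invFun := fun y => ⟨⟨y.1, y.2.trans r.2⟩, y.2⟩
      left_inv := fun _ => rfl
      right_inv := fun _ => rfl
      map_rel_iff' := Iff.rfl }
    fun _ => rfl

abbrev BisimTypes (L : Type) : ℕ → Type
  | 0 => L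
  | n + 1 => Set (BisimTypes L n)

instance BisimTypes.finite (L : Type) [Finite L] : ∀ n, Finite (BisimTypes L n)
  | 0 => inferInstanceAs (Finite L)
  | n + 1 => have := BisimTypes.finite L n; inferInstanceAs (Finite (Set (BisimTypes L n)))

def bisimType (L : Type) [PartialOrder L] : (n : ℕ) → Eval L → BisimTypes L n
  | 0, u => u.rootVal
  | n + 1, u => Set.range fun p => bisimType L n (u.restrict p)

lemma mem_bisimType_succ {n : ℕ} {u : Eval L} {t : BisimTypes L n} :
    t ∈ bisimType L (n+1) u ↔ ∃ p, bisimType L n (u.restrict p) = t :=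
  Iff.rfl

lemma sim_of_bisimType_eq : ∀ {n : ℕ} {u v : Eval L},
    bisimType L n u = bisimType L n v → sim L n u v
  | 0, _, _, h => h
  | n + 1, u, v, h => by
      refine ⟨fun p => ?_, fun q => ?_⟩
      · obtain ⟨q, hq⟩ := mem_bisimType_succ.1 (h ▸ ⟨p, rfl⟩ :
          bisimType L n (u.restrict p) ∈ bisimType L (n+1) v)
        exact ⟨q, sim_of_bisimType_eq hq.symm⟩
      · obtain ⟨p, hp⟩ := mem_bisimType_succ.1 (h ▸ ⟨q, rfl⟩ :
          bisimType L n (v.restrict q) ∈ bisimType L (n+1) u)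
        exact ⟨p, sim_of_bisimType_eq hp.symm⟩

end Bisimulation

section Subpresheaves

lemma BIndex.mem_iff {n : ℕ} {S : Set (Eval L)} (hS : BIndex L n S) {u v : Eval L}
    (huv : sim L n u v) : u ∈ S ↔ v ∈ S :=
  ⟨fun hu => hS u hu v huv, fun hv => hS v hv u (sim_symm huv)⟩

lemma BIndex.mono {n k : ℕ} {S : Set (Eval L)} (hS : BIndex L n S) (hnk : n ≤ k) :
    BIndex L k S :=
  fun u hu v huv => hS u hu v (sim_of_le hnk huv)

lemma BIndex.inter {n : ℕ} {S T : Set (Eval L)} (hS : BIndex L n S) (hT : BIndex L n T) :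
    BIndex L n (S ∩ T) :=
  fun u hu v huv => ⟨hS u hu.1 v huv, hT u hu.2 v huv⟩

lemma BIndex.union {n : ℕ} {S T : Set (Eval L)} (hS : BIndex L n S) (hT : BIndex L n T) :
    BIndex L n (S ∪ T) :=
  fun u hu v huv => hu.imp (hS u · v huv) (hT u · v huv)

lemma BIndex.himpPt {n : ℕ} {S T : Set (Eval L)} (hS : BIndex L n S) (hT : BIndex L n T) :
    BIndex L (n+1) (himpPt L S T) := by
  intro u hu v ⟨_, hvu⟩ q hq
  obtain ⟨p, hqp⟩ := hvu q
  exact (hT.mem_iff hqp).2 (hu p ((hS.mem_iff hqp).1 hq))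

lemma isSub_himpPt {n : ℕ} {S T : Set (Eval L)} (hS : BIndex L n S) (hT : BIndex L n T) :
    IsSub L (himpPt L S T) := by
  intro u hu p r hr
  have hsim := sim_restrict_restrict n u p r
  exact (hT.mem_iff hsim).2 (hu r.1 ((hS.mem_iff hsim).1 hr))

lemma InS.exists_bIndex₂ {S T : Set (Eval L)} (hS : InS L S) (hT : InS L T) :
    ∃ n, BIndex L n S ∧ BIndex L n T := by
  obtain ⟨-, n, hn⟩ := hS
  obtain ⟨-, k, hk⟩ := hT
  exact ⟨max n k, hn.mono (le_max_left n k), hk.mono (le_max_right n k)⟩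

lemma InS.empty : InS L ∅ := ⟨fun _ hu _ => hu, 0, fun _ hu _ _ => hu⟩

lemma InS.univ : InS L Set.univ := ⟨fun _ _ _ => trivial, 0, fun _ _ _ _ => trivial⟩

lemma InS.iota {d : Set L} (hd : IsLowerSet d) : InS L (iota L d) :=
  ⟨fun u hu p => hd (u.mono (u.P.le_root p)) hu, 0,
    fun _ hu _ (huv : _ = _) => show _ ∈ d from huv ▸ hu⟩

lemma InS.inter {S T : Set (Eval L)} (hS : InS L S) (hT : InS L T) : InS L (S ∩ T) :=
  have ⟨n, hSn, hTn⟩ := hS.exists_bIndex₂ hT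
  ⟨fun u hu p => ⟨hS.1 u hu.1 p, hT.1 u hu.2 p⟩, n, hSn.inter hTn⟩

lemma InS.union {S T : Set (Eval L)} (hS : InS L S) (hT : InS L T) : InS L (S ∪ T) :=
  have ⟨n, hSn, hTn⟩ := hS.exists_bIndex₂ hT
  ⟨fun u hu p => hu.imp (hS.1 u · p) (hT.1 u · p), n, hSn.union hTn⟩

lemma InS.himpPt {S T : Set (Eval L)} (hS : InS L S) (hT : InS L T) :
    InS L (himpPt L S T) :=
  have ⟨n, hSn, hTn⟩ := hS.exists_bIndex₂ hT
  ⟨isSub_himpPt hSn hTn, n + 1, hSn.himpPt hTn⟩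

end Subpresheaves

section Generation

variable {M : Type} [PartialOrder M]

inductive IotaGenerated (L : Type) [PartialOrder L] : Set (Eval L) → Prop
  | basic {d : Set L} : IsLowerSet d → IotaGenerated L (iota L d)
  | empty : IotaGenerated L ∅
  | univ : IotaGenerated L Set.univ
  | inter {S T : Set (Eval L)} : IotaGenerated L S → IotaGenerated L T → IotaGenerated L (S ∩ T)
  | union {S T : Set (Eval L)} : IotaGenerated L S → IotaGenerated L T → IotaGenerated L (S ∪ T)
  | himpPt {S T : Set (Eval L)} :
      IotaGenerated L S → IotaGenerated L T → IotaGenerated L (himpPt L S T)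

lemma IotaGenerated.inS {X : Set (Eval L)} (hX : IotaGenerated L X) : InS L X := by
  induction hX with
  | basic hd => exact InS.iota hd
  | empty => exact InS.empty
  | univ => exact InS.univ
  | inter _ _ hS hT => exact hS.inter hT
  | union _ _ hS hT => exact hS.union hT
  | himpPt _ _ hS hT => exact hS.himpPt hT

lemma IotaGenerated.biUnion {ι : Type*} {s : Set ι} (hs : s.Finite) {F : ι → Set (Eval L)}
    (hF : ∀ i ∈ s, IotaGenerated L (F i)) : IotaGenerated L (⋃ i ∈ s, F i) := by
  induction s, hs using Set.Finite.induction_on with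
  | empty => simpa using IotaGenerated.empty
  | insert _ _ ih =>
      rw [Set.biUnion_insert]
      exact .union (hF _ (Set.mem_insert _ _)) (ih fun i hi => hF i (Set.mem_insert_of_mem _ hi))

lemma IotaGenerated.biInter {ι : Type*} {s : Set ι} (hs : s.Finite) {F : ι → Set (Eval L)}
    (hF : ∀ i ∈ s, IotaGenerated L (F i)) : IotaGenerated L (⋂ i ∈ s, F i) := by
  induction s, hs using Set.Finite.induction_on with
  | empty => simpa using IotaGenerated.univ
  | insert _ _ ih =>
      rw [Set.biInter_insert]
      exact .inter (hF _ (Set.mem_insert _ _)) (ih fun i hi => hF i (Set.mem_insert_of_mem _ hi))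

def typesWithin (L : Type) [PartialOrder L] (n : ℕ) (s : Set (BisimTypes L n)) :
    Set (Eval L) :=
  {w | bisimType L (n+1) w ⊆ s}

def typeOmitted (L : Type) [PartialOrder L] (n : ℕ) (t : BisimTypes L n) : Set (Eval L) :=
  {w | t ∉ bisimType L (n+1) w}

lemma typeOmitted_zero (a : L) :
    typeOmitted L 0 a = himpPt L (iota L (Set.Iic a)) (iota L (Set.Iio a)) := by
  ext w
  refine not_exists.trans (forall_congr' fun p => ?_)
  exact ⟨fun hne (hle : _ ≤ a) => lt_of_le_of_ne hle hne, fun hlt heq => (hlt heq.le).ne heq⟩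

lemma typesWithin_eq_biInter (n : ℕ) (s : Set (BisimTypes L n)) :
    typesWithin L n s = ⋂ t ∈ sᶜ, typeOmitted L n t := by
  ext w
  simp only [Set.mem_iInter, Set.mem_compl_iff]
  exact forall_congr' fun t => not_imp_not.symm

lemma typeOmitted_succ (n : ℕ) (s : Set (BisimTypes L n)) :
    typeOmitted L (n+1) s = himpPt L (typesWithin L n s) (⋃ t ∈ s, typeOmitted L n t) := by
  ext w
  refine not_exists.trans (forall_congr' fun q => ?_)
  simp only [Set.mem_iUnion₂, exists_prop]
  show _ ≠ s ↔ (_ ⊆ s → ∃ t ∈ s, t ∉ _)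
  rw [← Set.not_subset]
  exact ⟨fun hne hsub hsup => hne (hsub.antisymm hsup), fun h heq => h heq.subset heq.symm.subset⟩

lemma iotaGenerated_typeOmitted [Finite L] :
    ∀ (n : ℕ) (t : BisimTypes L n), IotaGenerated L (typeOmitted L n t)
  | 0, a => typeOmitted_zero a ▸ .himpPt (.basic (isLowerSet_Iic a)) (.basic (isLowerSet_Iio a))
  | n + 1, s => by
      rw [typeOmitted_succ, typesWithin_eq_biInter]
      exact .himpPt (.biInter (Set.toFinite _) fun t _ => iotaGenerated_typeOmitted n t)
        (.biUnion (Set.toFinite _) fun t _ => iotaGenerated_typeOmitted n t)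

lemma iotaGenerated_typesWithin [Finite L] (n : ℕ) (s : Set (BisimTypes L n)) :
    IotaGenerated L (typesWithin L n s) :=
  typesWithin_eq_biInter n s ▸
    .biInter (Set.toFinite _) fun t _ => iotaGenerated_typeOmitted n t

lemma eq_biUnion_typesWithin {n : ℕ} {X : Set (Eval L)} (hX : IsSub L X)
    (hn : BIndex L n X) : X = ⋃ s ∈ bisimType L (n+1) '' X, typesWithin L n s := by
  ext v
  simp only [Set.mem_iUnion, Set.mem_image, exists_prop]
  refine ⟨fun hv => ⟨_, ⟨v, hv, rfl⟩, fun _ => id⟩, ?_⟩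
  rintro ⟨_, ⟨u, hu, rfl⟩, hvu⟩
  obtain ⟨p, hp⟩ := hvu ⟨v.P.root, rfl⟩
  have hroot : v.restrict v.P.root ∈ X := hn _ (hX u hu p) _ (sim_of_bisimType_eq hp)
  exact (hn.mem_iff (sim_restrict_root n v)).1 hroot

theorem InS.iotaGenerated [Finite L] {X : Set (Eval L)} (hX : InS L X) :
    IotaGenerated L X := by
  obtain ⟨hsub, n, hn⟩ := hX
  rw [eq_biUnion_typesWithin hsub hn]
  exact .biUnion (Set.toFinite _) fun s _ => iotaGenerated_typesWithin n s

structure IsHeytingHom (mu : Set (Eval L) → Set (Eval M)) : Prop where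
  map_inter : ∀ S T, InS L S → InS L T → mu (S ∩ T) = mu S ∩ mu T
  map_union : ∀ S T, InS L S → InS L T → mu (S ∪ T) = mu S ∪ mu T
  map_himpPt : ∀ S T, InS L S → InS L T → mu (himpPt L S T) = himpPt M (mu S) (mu T)
  map_empty : mu ∅ = ∅
  map_univ : mu Set.univ = Set.univ

lemma IotaGenerated.map_eq {mu nu : Set (Eval L) → Set (Eval M)} (hmu : IsHeytingHom mu)
    (hnu : IsHeytingHom nu) (hiota : ∀ d, IsLowerSet d → mu (iota L d) = nu (iota L d))
    {X : Set (Eval L)} (hX : IotaGenerated L X) : mu X = nu X := by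
  induction hX with
  | basic hd => exact hiota _ hd
  | empty => rw [hmu.map_empty, hnu.map_empty]
  | univ => rw [hmu.map_univ, hnu.map_univ]
  | inter hS hT ihS ihT =>
      rw [hmu.map_inter _ _ hS.inS hT.inS, hnu.map_inter _ _ hS.inS hT.inS, ihS, ihT]
  | union hS hT ihS ihT =>
      rw [hmu.map_union _ _ hS.inS hT.inS, hnu.map_union _ _ hS.inS hT.inS, ihS, ihT]
  | himpPt hS hT ihS ihT =>
      rw [hmu.map_himpPt _ _ hS.inS hT.inS, hnu.map_himpPt _ _ hS.inS hT.inS, ihS, ihT]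

end Generation

section Duality

variable {M : Type} [PartialOrder M]

lemma eq_of_forall_isLowerSet_iff {a b : L} (h : ∀ d : Set L, IsLowerSet d → (a ∈ d ↔ b ∈ d)) :
    a = b :=
  le_antisymm ((h _ (isLowerSet_Iic b)).2 le_rfl) ((h _ (isLowerSet_Iic a)).1 le_rfl)

lemma exists_bIndex_uniform [Finite L] {G : Set L → Set (Eval M)}
    (hG : ∀ d, IsLowerSet d → ∃ n, BIndex M n (G d)) :
    ∃ m, ∀ d, IsLowerSet d → BIndex M m (G d) := by
  choose n hn using hG
  obtain ⟨m, hm⟩ := Finite.exists_le fun d : {d : Set L // IsLowerSet d} => n d.1 d.2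
  exact ⟨m, fun d hd => (hn d hd).mono (hm ⟨d, hd⟩)⟩

lemma FRP.cast_root {P Q : FRP} (h : P = Q) :
    cast (congrArg FRP.carrier h).symm Q.root = P.root := by
  subst h
  rfl

lemma Eval.ext_of_cast {w z : Eval L} {Q : FRP} (hw : w.P = Q) (hz : z.P = Q)
    (h : ∀ q, w.map (cast (congrArg FRP.carrier hw).symm q)
      = z.map (cast (congrArg FRP.carrier hz).symm q)) : w = z := by
  obtain ⟨P, f, _⟩ := w
  obtain ⟨P', f', _⟩ := z
  change P = Q at hw
  change P' = Q at hz
  subst hw hz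
  obtain rfl : f = f' := funext h
  rfl

lemma Eval.eq_restrict_of_cast {w z : Eval L} {Q : FRP} (hw : w.P = Q) (p : Q.carrier)
    (hz : z.P = Q.down p)
    (h : ∀ r, z.map (cast (congrArg FRP.carrier hz).symm r)
      = w.map (cast (congrArg FRP.carrier hw).symm r.1)) :
    z = w.restrict (cast (congrArg FRP.carrier hw).symm p) := by
  subst hw
  exact Eval.ext_of_cast hz rfl h

def IsNatural (g : Eval M → Eval L) (hP : ∀ u, (g u).P = u.P) : Prop :=
  ∀ u p, g (u.restrict p) = (g u).restrict (cast (congrArg FRP.carrier (hP u)).symm p)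

/-- `g u` is the `L`-evaluation dual to `ev_u ∘ G` for every `u`; for `G = μ ∘ ι_L` this
characterizes `g = μ*`. -/
def IsDual (G : Set L → Set (Eval M)) (g : Eval M → Eval L) (hP : ∀ u, (g u).P = u.P) :
    Prop :=
  ∀ u d, IsLowerSet d → ∀ p,
    ((g u).map (cast (congrArg FRP.carrier (hP u)).symm p) ∈ d ↔ u.restrict p ∈ G d)

variable {g : Eval M → Eval L} {hP : ∀ u, (g u).P = u.P}

lemma IsNatural.exists_restrict_eq (hg : IsNatural g hP) (u : Eval M)
    (p' : (g u).P.carrier) : ∃ p, (g u).restrict p' = g (u.restrict p) :=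
  ⟨cast (congrArg FRP.carrier (hP u)) p', by rw [hg, cast_cast, cast_eq]⟩

lemma IsNatural.preimage_himpPt (hg : IsNatural g hP) (S T : Set (Eval L)) :
    g ⁻¹' himpPt L S T = himpPt M (g ⁻¹' S) (g ⁻¹' T) := by
  ext u
  refine ⟨fun hu p hp => ?_, fun hu p' => ?_⟩
  · rw [Set.mem_preimage, hg] at hp ⊢
    exact hu _ hp
  · obtain ⟨p, hp⟩ := hg.exists_restrict_eq u p'
    rw [hp]
    exact hu p

lemma IsNatural.isHeytingHom (hg : IsNatural g hP) : IsHeytingHom (g ⁻¹' ·) where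
  map_inter _ _ _ _ := Set.preimage_inter
  map_union _ _ _ _ := Set.preimage_union
  map_himpPt S T _ _ := hg.preimage_himpPt S T
  map_empty := Set.preimage_empty
  map_univ := Set.preimage_univ

lemma IsNatural.sim_of_sim_add (hg : IsNatural g hP) {m : ℕ}
    (h₀ : ∀ u v, sim M m u v → sim L 0 (g u) (g v)) :
    ∀ n u v, sim M (n+m) u v → sim L n (g u) (g v)
  | 0, u, v, h => h₀ u v (by rwa [zero_add] at h)
  | n + 1, u, v, h => by
      rw [Nat.add_right_comm] at h
      obtain ⟨h₁, h₂⟩ := h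
      refine ⟨fun p' => ?_, fun q' => ?_⟩
      · obtain ⟨p, hp⟩ := hg.exists_restrict_eq u p'
        obtain ⟨q, hq⟩ := h₁ p
        refine ⟨cast (congrArg FRP.carrier (hP v)).symm q, ?_⟩
        rw [hp, ← hg]
        exact hg.sim_of_sim_add h₀ n _ _ hq
      · obtain ⟨q, hq⟩ := hg.exists_restrict_eq v q'
        obtain ⟨p, hp⟩ := h₂ q
        refine ⟨cast (congrArg FRP.carrier (hP u)).symm p, ?_⟩
        rw [hq, ← hg]
        exact hg.sim_of_sim_add h₀ n _ _ hp

lemma isDual_preimage_iota (hg : IsNatural g hP) : IsDual (fun d => g ⁻¹' iota L d) g hP := by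
  intro u d _ p
  rw [Set.mem_preimage, hg u p]
  rfl

lemma IsDual.unique {G : Set L → Set (Eval M)} (hg : IsDual G g hP) {g' : Eval M → Eval L}
    {hP' : ∀ u, (g' u).P = u.P} (hg' : IsDual G g' hP') : g = g' :=
  funext fun u => Eval.ext_of_cast (hP u) (hP' u) fun q =>
    eq_of_forall_isLowerSet_iff fun d hd => (hg u d hd q).trans (hg' u d hd q).symm

variable {G : Set L → Set (Eval M)} {m : ℕ}

lemma IsDual.isNatural (hg : IsDual G g hP)
    (hG : ∀ d, IsLowerSet d → BIndex M m (G d)) : IsNatural g hP := fun u p =>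
  Eval.eq_restrict_of_cast (hP u) p (hP (u.restrict p)) fun r =>
    eq_of_forall_isLowerSet_iff fun d hd => (hg (u.restrict p) d hd r).trans
      (((hG d hd).mem_iff (sim_restrict_restrict m u p r)).trans (hg u d hd r.1).symm)

lemma IsDual.rootVal_mem_iff (hg : IsDual G g hP)
    (hG : ∀ d, IsLowerSet d → BIndex M m (G d)) {d : Set L} (hd : IsLowerSet d)
    (u : Eval M) : (g u).rootVal ∈ d ↔ u ∈ G d := by
  have hroot := hg u d hd u.P.root
  rw [FRP.cast_root (hP u)] at hroot
  exact hroot.trans ((hG d hd).mem_iff (sim_restrict_root m u))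

lemma IsDual.sim_zero (hg : IsDual G g hP)
    (hG : ∀ d, IsLowerSet d → BIndex M m (G d)) {u v : Eval M} (huv : sim M m u v) :
    sim L 0 (g u) (g v) :=
  eq_of_forall_isLowerSet_iff fun d hd => by
    rw [hg.rootVal_mem_iff hG hd, hg.rootVal_mem_iff hG hd]
    exact (hG d hd).mem_iff huv

lemma IsDual.preimage_iota (hg : IsDual G g hP)
    (hG : ∀ d, IsLowerSet d → BIndex M m (G d)) {d : Set L} (hd : IsLowerSet d) :
    g ⁻¹' iota L d = G d :=
  Set.ext (hg.rootVal_mem_iff hG hd)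

end Duality

theorem duality_theorem_general (L M : Type) [PartialOrder L] [Finite L]
    [PartialOrder M]
    (mu : Set (Eval L) → Set (Eval M))
    (hmuInS : ∀ X : Set (Eval L), InS L X → InS M (mu X))
    (hmu_inter : ∀ S T : Set (Eval L), InS L S → InS L T → mu (S ∩ T) = mu S ∩ mu T)
    (hmu_union : ∀ S T : Set (Eval L), InS L S → InS L T → mu (S ∪ T) = mu S ∪ mu T)
    (hmu_himp : ∀ S T : Set (Eval L), InS L S → InS L T →
      mu (himpPt L S T) = himpPt M (mu S) (mu T))
    (hmu_bot : mu (∅ : Set (Eval L)) = ∅)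
    (hmu_top : mu (Set.univ : Set (Eval L)) = Set.univ)
    (mustar : Eval M → Eval L)
    (hPdom : ∀ u : Eval M, (mustar u).P = u.P)
    (hdual : ∀ (u : Eval M) (d : Set L), IsLowerSet d → ∀ p : u.P.carrier,
      ((mustar u).map (cast (congrArg FRP.carrier (hPdom u)).symm p) ∈ d ↔
        u.restrict p ∈ mu (iota L d))) :
    -- (1) μ* is a natural transformation with a b-index
    ((∀ (u : Eval M) (p : u.P.carrier),
        mustar (u.restrict p)
          = (mustar u).restrict (cast (congrArg FRP.carrier (hPdom u)).symm p)) ∧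
      (∃ m : ℕ, ∀ (n : ℕ) (u v : Eval M),
        sim M (n+m) u v → sim L n (mustar u) (mustar v))) ∧
    -- (2) μ = (μ*)⁻¹
    (∀ X : Set (Eval L), InS L X → mu X = mustar ⁻¹' X) ∧
    -- (3) f = (f⁻¹)* : any family dual to ev_u ∘ f⁻¹ ∘ ι_L coincides with f
    (∀ (f : Eval M → Eval L)
      (hfdom : ∀ u : Eval M, (f u).P = u.P)
      (_ : ∀ (u : Eval M) (p : u.P.carrier),
        f (u.restrict p) = (f u).restrict (cast (congrArg FRP.carrier (hfdom u)).symm p))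
      (m : ℕ)
      (_ : ∀ (n : ℕ) (u v : Eval M), sim M (n+m) u v → sim L n (f u) (f v))
      (g : Eval M → Eval L)
      (hgdom : ∀ u : Eval M, (g u).P = u.P)
      (_ : ∀ (u : Eval M) (d : Set L), IsLowerSet d → ∀ p : u.P.carrier,
        ((g u).map (cast (congrArg FRP.carrier (hgdom u)).symm p) ∈ d ↔
          u.restrict p ∈ f ⁻¹' (iota L d))),
      g = f) := by
  have hdual' : IsDual (fun d => mu (iota L d)) mustar hPdom := hdual
  obtain ⟨m, hm⟩ := exists_bIndex_uniform fun d hd => (hmuInS _ (InS.iota hd)).2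
  have hnat : IsNatural mustar hPdom := hdual'.isNatural hm
  have hmu : IsHeytingHom mu := ⟨hmu_inter, hmu_union, hmu_himp, hmu_bot, hmu_top⟩
  refine ⟨⟨hnat, m, hnat.sim_of_sim_add fun _ _ => hdual'.sim_zero hm⟩, fun X hX => ?_,
    fun f hfdom (hfnat : IsNatural f hfdom) _ _ g hgdom (hgdual : IsDual _ g hgdom) =>
      hgdual.unique (isDual_preimage_iota hfnat)⟩
  exact hX.iotaGenerated.map_eq hmu hnat.isHeytingHom fun d hd =>
    (hdual'.preimage_iota hm hd).symm

/-- with `μ : S(h_L) → S(h_M)` a Heyting morphism and `μ* : h_M → h_L`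
the family of evaluations dual to `ev_u ∘ μ ∘ ι_L`:
(1) `μ*` is a natural transformation (commutes with restriction) having a b-index;
(2) `μ = (μ*)⁻¹` on `S(h_L)`;
(3) `f = (f⁻¹)*` for every b-indexed natural transformation `f : h_M → h_L`, i.e. any
family satisfying the duality property characterizing `(f⁻¹)*` equals `f`.
Together these say that `h_L ↦ S(h_L)`, `f ↦ f⁻¹` is a full and faithful functor
(essentially surjective by freeness of `S(h_L)`), hence an equivalence of categories. -/
theorem duality_theorem (L M : Type) [PartialOrder L] [Finite L]
    [PartialOrder M] [Finite M]
    (mu : Set (Eval L) → Set (Eval M))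
    (hmuInS : ∀ X : Set (Eval L), InS L X → InS M (mu X))
    (hmu_inter : ∀ S T : Set (Eval L), InS L S → InS L T → mu (S ∩ T) = mu S ∩ mu T)
    (hmu_union : ∀ S T : Set (Eval L), InS L S → InS L T → mu (S ∪ T) = mu S ∪ mu T)
    (hmu_himp : ∀ S T : Set (Eval L), InS L S → InS L T →
      mu (himpPt L S T) = himpPt M (mu S) (mu T))
    (hmu_bot : mu (∅ : Set (Eval L)) = ∅)
    (hmu_top : mu (Set.univ : Set (Eval L)) = Set.univ)
    (mustar : Eval M → Eval L)
    (hPdom : ∀ u : Eval M, (mustar u).P = u.P)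
    (hdual : ∀ (u : Eval M) (d : Set L), IsLowerSet d → ∀ p : u.P.carrier,
      ((mustar u).map (cast (congrArg FRP.carrier (hPdom u)).symm p) ∈ d ↔
        u.restrict p ∈ mu (iota L d))) :
    -- (1) μ* is a natural transformation with a b-index
    ((∀ (u : Eval M) (p : u.P.carrier),
        mustar (u.restrict p)
          = (mustar u).restrict (cast (congrArg FRP.carrier (hPdom u)).symm p)) ∧
      (∃ m : ℕ, ∀ (n : ℕ) (u v : Eval M),
        sim M (n+m) u v → sim L n (mustar u) (mustar v))) ∧
    -- (2) μ = (μ*)⁻¹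
    (∀ X : Set (Eval L), InS L X → mu X = mustar ⁻¹' X) ∧
    -- (3) f = (f⁻¹)* : any family dual to ev_u ∘ f⁻¹ ∘ ι_L coincides with f
    (∀ (f : Eval M → Eval L)
      (hfdom : ∀ u : Eval M, (f u).P = u.P)
      (_ : ∀ (u : Eval M) (p : u.P.carrier),
        f (u.restrict p) = (f u).restrict (cast (congrArg FRP.carrier (hfdom u)).symm p))
      (m : ℕ)
      (_ : ∀ (n : ℕ) (u v : Eval M), sim M (n+m) u v → sim L n (f u) (f v))
      (g : Eval M → Eval L)
      (hgdom : ∀ u : Eval M, (g u).P = u.P)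
      (_ : ∀ (u : Eval M) (d : Set L), IsLowerSet d → ∀ p : u.P.carrier,
        ((g u).map (cast (congrArg FRP.carrier (hgdom u)).symm p) ∈ d ↔
          u.restrict p ∈ f ⁻¹' (iota L d))),
      g = f) :=
  duality_theorem_general L M mu hmuInS hmu_inter hmu_union hmu_himp hmu_bot hmu_top mustar hPdom
    hdual
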